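/- The one-sided derivative characterization of the marginal price: for the cost function C(d) of the dispatch LP with sorted prices p_1 ≤ ⋯ ≤ p_n, C is piecewise linear with C(d) = C(D_{k−1}) + p_k(d − D_{k−1}) for d ∈ [D_{k−1}, D_k], where D_k = q_1 + ⋯ + q_k; hence the right derivative of C at d equals the marginal price of the merit-order dispatch. -/

import Mathlib

/-!
Exchange argument: for any feasible dispatch `s` of total `d` with `D k ≤ d ≤ D (k+1)`,
`∑ (p j - p k) s j ≥ ∑_{j<k} (p j - p k) q j`, since the summands with `j < k` have a
nonpositive coefficient and `s j ≤ q j`, and those with `j ≥ k` are nonnegative. Hence the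
merit-order dispatch, which fills offers `0, …, k-1` and puts the remaining `d - D k` on
offer `k`, attains `C d`, and `C` is affine with slope `p k` on `[D k, D (k+1)]`.
-/

open Finset Set

/-- The dispatch filling offers `j < k` completely, putting `x` on offer `k`, and nothing
on later offers. -/
def meritOrder (q : ℕ → ℝ) (k : ℕ) (x : ℝ) (j : ℕ) : ℝ :=
  if j < k then q j else if j = k then x else 0

def dispatchCosts (n : ℕ) (p q : ℕ → ℝ) (d : ℝ) : Set ℝ :=
  {c : ℝ | ∃ s : ℕ → ℝ, (∀ j < n, 0 ≤ s j ∧ s j ≤ q j) ∧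
    (∑ j ∈ range n, s j = d) ∧ c = ∑ j ∈ range n, p j * s j}

section Dispatch

variable {n k : ℕ} {p q : ℕ → ℝ}

theorem sum_mul_meritOrder (w : ℕ → ℝ) (x : ℝ) (hk : k < n) :
    ∑ j ∈ range n, w j * meritOrder q k x j = ∑ j ∈ range k, w j * q j + w k * x := by
  have htail : ∑ j ∈ Ico (k + 1) n, w j * meritOrder q k x j = 0 :=
    sum_eq_zero fun j hj => by
      have : k + 1 ≤ j := (mem_Ico.1 hj).1
      simp [meritOrder, show ¬ j < k by omega, show j ≠ k by omega]
  rw [← sum_range_add_sum_Ico _ (Nat.succ_le_of_lt hk), htail, add_zero, sum_range_succ]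
  congr 1
  · exact sum_congr rfl fun j hj => by simp [meritOrder, mem_range.1 hj]
  · simp [meritOrder]

theorem meritOrder_feasible (hq : ∀ j < n, 0 ≤ q j) {x : ℝ} (hx₀ : 0 ≤ x) (hxq : x ≤ q k) :
    ∀ j < n, 0 ≤ meritOrder q k x j ∧ meritOrder q k x j ≤ q j := by
  intro j hj
  unfold meritOrder
  split_ifs with hjk hjk'
  · exact ⟨hq j hj, le_rfl⟩
  · exact ⟨hx₀, hjk' ▸ hxq⟩
  · exact ⟨le_rfl, hq j hj⟩

theorem merit_cost_le_cost (hsort : ∀ i j, i ≤ j → j < n → p i ≤ p j) (hk : k < n)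
    {s : ℕ → ℝ} (hs : ∀ j < n, 0 ≤ s j ∧ s j ≤ q j) :
    ∑ j ∈ range k, p j * q j + p k * (∑ j ∈ range n, s j - ∑ j ∈ range k, q j) ≤
      ∑ j ∈ range n, p j * s j := by
  have hlow : ∑ j ∈ range k, (p j - p k) * q j ≤ ∑ j ∈ range k, (p j - p k) * s j :=
    sum_le_sum fun j hj => mul_le_mul_of_nonpos_left (hs j ((mem_range.1 hj).trans hk)).2
      (sub_nonpos.2 (hsort j k (mem_range.1 hj).le hk))
  have hhigh : 0 ≤ ∑ j ∈ Ico k n, (p j - p k) * s j :=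
    sum_nonneg fun j hj => mul_nonneg (sub_nonneg.2 (hsort k j (mem_Ico.1 hj).1 (mem_Ico.1 hj).2))
      (hs j (mem_Ico.1 hj).2).1
  have hsplit := sum_range_add_sum_Ico (fun j => (p j - p k) * s j) hk.le
  simp only [sub_mul, sum_sub_distrib, ← mul_sum] at hlow hhigh hsplit
  linarith

theorem isLeast_dispatchCosts (hq : ∀ j < n, 0 ≤ q j) (hsort : ∀ i j, i ≤ j → j < n → p i ≤ p j)
    (hk : k < n) {d : ℝ} (hd : d ∈ Icc (∑ j ∈ range k, q j) (∑ j ∈ range (k + 1), q j)) :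
    IsLeast (dispatchCosts n p q d)
      (∑ j ∈ range k, p j * q j + p k * (d - ∑ j ∈ range k, q j)) := by
  rw [sum_range_succ] at hd
  refine ⟨⟨meritOrder q k (d - ∑ j ∈ range k, q j), meritOrder_feasible hq (by linarith [hd.1])
    (by linarith [hd.2]), ?_, (sum_mul_meritOrder p _ hk).symm⟩, ?_⟩
  · simpa using sum_mul_meritOrder (q := q) (fun _ => 1) (d - ∑ j ∈ range k, q j) hk
  · rintro c ⟨s, hs, rfl, rfl⟩
    exact merit_cost_le_cost hsort hk hs

end Dispatch

theorem hasDerivWithinAt_Ici_of_eqOn_affine {f : ℝ → ℝ} {a b c m d : ℝ}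
    (hf : ∀ x ∈ Icc a b, f x = c + m * (x - a)) (hd : d ∈ Ico a b) :
    HasDerivWithinAt f m (Ici d) d := by
  have haff : HasDerivWithinAt (fun x => c + m * (x - a)) m (Ici d) d := by
    simpa using (((hasDerivAt_id d).sub_const a).const_mul m).const_add c |>.hasDerivWithinAt
  refine haff.congr_of_eventuallyEq ?_ (hf d (Ico_subset_Icc_self hd))
  filter_upwards [nhdsWithin_le_nhds (Iio_mem_nhds hd.2), self_mem_nhdsWithin] with x hxb hxd
  exact hf x ⟨hd.1.trans hxd, le_of_lt hxb⟩

/-- Piecewise linearity of the dispatch-LP cost function: on each merit-order block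
the cost grows affinely with slope equal to the marginal price, which is therefore
its right derivative. -/
theorem stmt_16 (n : ℕ) (p q : ℕ → ℝ)
    (hq : ∀ k < n, 0 < q k)
    (hsort : ∀ i, ∀ j, i ≤ j → j < n → p i ≤ p j)
    (D : ℕ → ℝ) (hD : ∀ k, D k = ∑ i ∈ Finset.range k, q i)
    (C : ℝ → ℝ)
    (hC : ∀ d ∈ Set.Icc (0 : ℝ) (D n),
      C d = sInf {c : ℝ | ∃ s : ℕ → ℝ, (∀ j < n, 0 ≤ s j ∧ s j ≤ q j) ∧
        (∑ j ∈ Finset.range n, s j = d) ∧ c = ∑ j ∈ Finset.range n, p j * s j}) :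
    (∀ k < n, ∀ d ∈ Set.Icc (D k) (D (k + 1)),
      C d = C (D k) + p k * (d - D k)) ∧
    (∀ k < n, ∀ d ∈ Set.Ico (D k) (D (k + 1)),
      HasDerivWithinAt C (p k) (Set.Ici d) d) := by
  have hq₀ : ∀ j < n, 0 ≤ q j := fun j hj => (hq j hj).le
  have hD_mono : ∀ a b, a ≤ b → b ≤ n → D a ≤ D b := fun a b hab hbn => by
    rw [hD, hD]
    exact sum_le_sum_of_subset_of_nonneg (range_subset_range.2 hab)
      fun j hj _ => hq₀ j ((mem_range.1 hj).trans_le hbn)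
  have hcost : ∀ k < n, ∀ d ∈ Icc (D k) (D (k + 1)),
      C d = ∑ j ∈ range k, p j * q j + p k * (d - D k) := by
    intro k hk d hd
    have hd₀ : 0 ≤ d := by simpa [hD] using (hD_mono 0 k k.zero_le hk.le).trans hd.1
    rw [hC d ⟨hd₀, hd.2.trans (hD_mono _ _ hk le_rfl)⟩]
    rw [hD, hD] at hd
    rw [hD]
    exact (isLeast_dispatchCosts hq₀ hsort hk hd).csInf_eq
  have haffine : ∀ k < n, ∀ d ∈ Icc (D k) (D (k + 1)), C d = C (D k) + p k * (d - D k) := by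
    intro k hk d hd
    rw [hcost k hk d hd, hcost k hk (D k) ⟨le_rfl, hD_mono k (k + 1) k.le_succ hk⟩]
    ring
  exact ⟨haffine, fun k hk _ => hasDerivWithinAt_Ici_of_eqOn_affine (haffine k hk)⟩
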